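/- Let p be a prime, n ≥ 1 an integer, Λ a commutative ℚ-algebra, A an associative unital Λ-algebra, and X ∈ A a nilpotent element with X^{p^n} = 0. For a truncated Witt vector t ∈ W_n(Λ) (Witt vectors of length n for the prime p) with coefficients t_0, …, t_{n−1} ∈ Λ, define E_X(t) = ∏_{m=0}^{n−1} F(t_m · X^{p^m}), where F is the Artin–Hasse exponential evaluated at a nilpotent element. Then for all t, s ∈ W_n(Λ): E_X(t + s) = E_X(t) · E_X(s), where t + s denotes addition of truncated Witt vectors. In particular each E_X(t) is invertible in A, and E_X defines a group homomorphism from the additive group of W_n(Λ) to the unit group of A. -/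

import Mathlib

/-!
In a commutative `ℚ`-algebra in which `x ^ p ^ n = 0`, each factor `F(t_m x^(p^m))` is
`exp (∑ᵢ t_m^(p^i) x^(p^(m+i)) / p^i)`. Collecting exponents along `m + i = k` (terms with
`m + i ≥ n` vanish) gives `E_x(t) = exp (∑_{k<n} w_k(t) x^(p^k) / p^k)`, where `w_k` are the ghost
components of `t`. Ghost components are additive, so `E_x` is multiplicative. A general
`Λ`-algebra `A` is reached through the `Λ`-algebra map `Λ[T]/(T^(p^n)) → A`, `T ↦ X`.
-/

/-- The exponential `exp(a) = ∑_{k ≥ 0} a^k / k!` of a nilpotent element `a` of a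
`ℚ`-algebra, truncated at `N`; when `a ^ N = 0` the omitted terms vanish, so this is the
full (finite) exponential sum. -/
noncomputable def expNil {A : Type*} [Ring A] [Algebra ℚ A] (N : ℕ) (a : A) : A :=
  ∑ k ∈ Finset.range N, (k.factorial : ℚ)⁻¹ • a ^ k

/-- The Artin–Hasse exponential `F(a) = exp(∑_{i ≥ 0} a^(p^i) / p^i)` of a nilpotent
element `a` with `a ^ (p ^ n) = 0` (the omitted terms of both sums vanish). -/
noncomputable def artinHasseNil {A : Type*} [Ring A] [Algebra ℚ A] (p n : ℕ) (a : A) : A :=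
  expNil (p ^ n) (∑ i ∈ Finset.range n, ((p : ℚ) ^ i)⁻¹ • a ^ p ^ i)

/-- `E_X(t) = ∏_{m=0}^{n-1} F(t_m · X^(p^m))` for a truncated Witt vector
`t ∈ W_n(Λ)` with coefficients `t_0, …, t_{n-1}` and a nilpotent `X` with `X^(p^n) = 0`;
the product is taken in the order `m = 0, 1, …, n-1`. -/
noncomputable def wittArtinHasseExp (p n : ℕ) [Fact p.Prime]
    {Λ : Type*} [CommRing Λ] [Algebra ℚ Λ]
    {A : Type*} [Ring A] [Algebra ℚ A] [Algebra Λ A]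
    (X : A) (t : TruncatedWittVector p n Λ) : A :=
  ((List.finRange n).map fun m =>
    artinHasseNil p n (algebraMap Λ A (t.coeff m) * X ^ p ^ (m : ℕ))).prod

open Finset WittVector

lemma expNil_eq_exp {A : Type*} [Ring A] [Algebra ℚ A] {N : ℕ} {a : A} (ha : a ^ N = 0) :
    expNil N a = IsNilpotent.exp a :=
  (IsNilpotent.exp_eq_sum ha).symm

lemma map_expNil {A B F : Type*} [Ring A] [Algebra ℚ A] [Ring B] [Algebra ℚ B]
    [FunLike F A B] [RingHomClass F A B] (f : F) (N : ℕ) (a : A) :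
    f (expNil N a) = expNil N (f a) := by
  simp only [expNil, map_sum, map_rat_smul, map_pow]

lemma map_artinHasseNil {A B F : Type*} [Ring A] [Algebra ℚ A] [Ring B] [Algebra ℚ B]
    [FunLike F A B] [RingHomClass F A B] (f : F) (p n : ℕ) (a : A) :
    f (artinHasseNil p n a) = artinHasseNil p n (f a) := by
  simp only [artinHasseNil, map_expNil, map_sum, map_rat_smul, map_pow]

lemma IsNilpotent.exp_sum {B ι : Type*} [CommRing B] [Algebra ℚ B] {s : Finset ι} {f : ι → B}
    (hf : ∀ i ∈ s, IsNilpotent (f i)) :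
    IsNilpotent.exp (∑ i ∈ s, f i) = ∏ i ∈ s, IsNilpotent.exp (f i) := by
  classical
  induction s using Finset.induction_on with
  | empty => simp
  | insert i s hi ih =>
    rw [prod_insert hi, sum_insert hi, ← ih fun j hj => hf j (mem_insert_of_mem hj),
      IsNilpotent.exp_add_of_commute (Commute.all _ _) (hf i (mem_insert_self i s))
        (isNilpotent_sum fun j hj => hf j (mem_insert_of_mem hj))]

lemma dvd_rat_smul {B : Type*} [CommRing B] [Algebra ℚ B] {x y : B} (q : ℚ) (h : x ∣ y) :
    x ∣ q • y := by
  rw [Algebra.smul_def]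
  exact h.mul_left _

lemma pow_eq_zero_of_dvd {B : Type*} [CommMonoidWithZero B] {x y : B} {N : ℕ} (h : x ∣ y)
    (hx : x ^ N = 0) : y ^ N = 0 :=
  zero_dvd_iff.mp (hx ▸ pow_dvd_pow_of_dvd h N)

lemma artinHasseNil_eq_exp {B : Type*} [CommRing B] [Algebra ℚ B] {p n : ℕ} (hp : 0 < p)
    {a : B} (ha : a ^ p ^ n = 0) :
    artinHasseNil p n a = IsNilpotent.exp (∑ i ∈ range n, ((p : ℚ) ^ i)⁻¹ • a ^ p ^ i) :=
  expNil_eq_exp <| pow_eq_zero_of_dvd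
    (dvd_sum fun i _ => dvd_rat_smul _ (dvd_pow_self a (pow_pos hp i).ne')) ha

lemma artinHasseNil_zero {A : Type*} [Ring A] [Algebra ℚ A] {p : ℕ} (n : ℕ) (hp : 0 < p) :
    artinHasseNil p n (0 : A) = 1 := by
  simp only [artinHasseNil, zero_pow (pow_pos hp _).ne', smul_zero, sum_const_zero]
  rw [expNil_eq_exp (zero_pow (pow_pos hp n).ne'), IsNilpotent.exp_zero]

lemma sum_range_sum_range_eq_sum_range_sum_range_succ {M : Type*} [AddCommMonoid M] {n : ℕ}
    {f : ℕ → ℕ → M} (hf : ∀ m i, n ≤ m + i → f m i = 0) :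
    ∑ m ∈ range n, ∑ i ∈ range n, f m i = ∑ k ∈ range n, ∑ m ∈ range (k + 1), f m (k - m) := by
  have inner : ∀ m ∈ range n, ∑ i ∈ range n, f m i = ∑ k ∈ Ico m n, f m (k - m) := by
    intro m hm
    rw [sum_Ico_eq_sum_range]
    simp only [Nat.add_sub_cancel_left]
    refine (sum_subset (fun i hi => ?_) fun i hi hi' => hf m i ?_).symm <;>
      simp only [mem_range] at * <;> omega
  rw [sum_congr rfl inner]
  simpa only [range_eq_Ico] using sum_Ico_Ico_comm 0 n fun m k => f m (k - m)

lemma inv_pow_smul_ghostComponent_mul {p : ℕ} [hp : Fact p.Prime] {Λ B : Type*} [CommRing Λ]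
    [CommRing B] [Algebra ℚ B] [Algebra Λ B] (w : WittVector p Λ) (y : B) (k : ℕ) :
    ((p : ℚ) ^ k)⁻¹ • (algebraMap Λ B (ghostComponent k w) * y ^ p ^ k)
      = ∑ m ∈ range (k + 1),
          ((p : ℚ) ^ (k - m))⁻¹ • (algebraMap Λ B (w.coeff m) * y ^ p ^ m) ^ p ^ (k - m) := by
  rw [ghostComponent_apply, aeval_wittPolynomial, map_sum, sum_mul, smul_sum]
  refine sum_congr rfl fun m hm => ?_
  have hmk : m ≤ k := Nat.lt_succ_iff.mp (mem_range.mp hm)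
  have hp0 : (p : ℚ) ≠ 0 := Nat.cast_ne_zero.mpr hp.out.ne_zero
  rw [mul_pow, ← pow_mul, ← pow_add, Nat.add_sub_cancel' hmk, map_mul, map_pow, map_pow,
    map_natCast, mul_assoc, ← map_natCast (algebraMap ℚ B), ← map_pow, ← Algebra.smul_def,
    smul_smul]
  congr 1
  rw [← Nat.sub_add_cancel hmk, pow_add, Nat.add_sub_cancel]
  field_simp

noncomputable def wittArtinHasseLog (p n : ℕ) [Fact p.Prime] {Λ B : Type*} [CommRing Λ]
    [Ring B] [Algebra ℚ B] [Algebra Λ B] (x : B) (w : WittVector p Λ) : B :=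
  ∑ k ∈ range n, ((p : ℚ) ^ k)⁻¹ • (algebraMap Λ B (ghostComponent k w) * x ^ p ^ k)

section WittArtinHasse

variable {p n : ℕ} [hp : Fact p.Prime] {Λ : Type*} [CommRing Λ]

section Commutative

variable {B : Type*} [CommRing B] [Algebra ℚ B] [Algebra Λ B] {x : B}

lemma wittArtinHasseLog_add (w v : WittVector p Λ) :
    wittArtinHasseLog p n x (w + v) = wittArtinHasseLog p n x w + wittArtinHasseLog p n x v := by
  simp only [wittArtinHasseLog, map_add, add_mul, smul_add, sum_add_distrib]

lemma isNilpotent_wittArtinHasseLog (hx : x ^ p ^ n = 0) (w : WittVector p Λ) :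
    IsNilpotent (wittArtinHasseLog p n x w) :=
  ⟨p ^ n, pow_eq_zero_of_dvd (dvd_sum fun k _ =>
    dvd_rat_smul _ ((dvd_pow_self x (pow_pos hp.out.pos k).ne').mul_left _)) hx⟩

variable [Algebra ℚ Λ]

theorem wittArtinHasseExp_truncate (hx : x ^ p ^ n = 0) (w : WittVector p Λ) :
    wittArtinHasseExp p n x (truncate n w) = IsNilpotent.exp (wittArtinHasseLog p n x w) := by
  have hp0 : 0 < p := hp.out.pos
  set a : ℕ → B := fun m => algebraMap Λ B (w.coeff m) * x ^ p ^ m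
  have hxa : ∀ m, x ∣ a m := fun m => (dvd_pow_self x (pow_pos hp0 m).ne').mul_left _
  calc wittArtinHasseExp p n x (truncate n w) = ∏ m ∈ range n, artinHasseNil p n (a m) := by
        rw [wittArtinHasseExp, ← Fin.prod_univ_def, ← Fin.prod_univ_eq_prod_range]
        simp only [coeff_truncate, a]
    _ = ∏ m ∈ range n, IsNilpotent.exp (∑ i ∈ range n, ((p : ℚ) ^ i)⁻¹ • a m ^ p ^ i) :=
        prod_congr rfl fun m _ => artinHasseNil_eq_exp hp0 (pow_eq_zero_of_dvd (hxa m) hx)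
    _ = IsNilpotent.exp (∑ m ∈ range n, ∑ i ∈ range n, ((p : ℚ) ^ i)⁻¹ • a m ^ p ^ i) :=
        (IsNilpotent.exp_sum fun m _ => ⟨p ^ n, pow_eq_zero_of_dvd (dvd_sum fun i _ =>
          dvd_rat_smul _ ((hxa m).trans (dvd_pow_self _ (pow_pos hp0 i).ne'))) hx⟩).symm
    _ = IsNilpotent.exp (wittArtinHasseLog p n x w) := by
        rw [sum_range_sum_range_eq_sum_range_sum_range_succ]
        · simp only [wittArtinHasseLog, inv_pow_smul_ghostComponent_mul, a]
        intro m i hmi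
        rw [mul_pow, ← pow_mul, ← pow_add,
          pow_eq_zero_of_le (Nat.pow_le_pow_right hp0 hmi) hx, mul_zero, smul_zero]

theorem wittArtinHasseExp_add_of_pow_eq_zero_of_commRing (hx : x ^ p ^ n = 0)
    (t s : TruncatedWittVector p n Λ) :
    wittArtinHasseExp p n x (t + s) = wittArtinHasseExp p n x t * wittArtinHasseExp p n x s := by
  obtain ⟨w, rfl⟩ := truncate_surjective (p := p) (R := Λ) n t
  obtain ⟨v, rfl⟩ := truncate_surjective (p := p) (R := Λ) n s
  rw [← map_add, wittArtinHasseExp_truncate hx, wittArtinHasseExp_truncate hx,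
    wittArtinHasseExp_truncate hx, wittArtinHasseLog_add, IsNilpotent.exp_add_of_commute
      (Commute.all _ _) (isNilpotent_wittArtinHasseLog hx w) (isNilpotent_wittArtinHasseLog hx v)]

end Commutative

variable [Algebra ℚ Λ] {A : Type*} [Ring A] [Algebra ℚ A] [Algebra Λ A]

theorem map_wittArtinHasseExp {B : Type*} [Ring B] [Algebra ℚ B] [Algebra Λ B] (f : B →ₐ[Λ] A)
    (x : B) (t : TruncatedWittVector p n Λ) :
    f (wittArtinHasseExp p n x t) = wittArtinHasseExp p n (f x) t := by
  simp only [wittArtinHasseExp, map_list_prod, List.map_map, Function.comp_def,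
    map_artinHasseNil, map_mul, map_pow, AlgHom.commutes]

theorem wittArtinHasseExp_zero (x : A) :
    wittArtinHasseExp p n x (0 : TruncatedWittVector p n Λ) = 1 := by
  simp only [wittArtinHasseExp, TruncatedWittVector.coeff_zero, map_zero, zero_mul,
    artinHasseNil_zero n hp.out.pos, List.map_const', List.prod_replicate, one_pow]

open Polynomial in
theorem wittArtinHasseExp_add_of_pow_eq_zero {x : A} (hx : x ^ p ^ n = 0)
    (t s : TruncatedWittVector p n Λ) :
    wittArtinHasseExp p n x (t + s) = wittArtinHasseExp p n x t * wittArtinHasseExp p n x s := by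
  set I : Ideal Λ[X] := Ideal.span {X ^ p ^ n}
  have hI : ∀ q ∈ I, aeval x q = 0 := fun q hq => by
    obtain ⟨r, rfl⟩ := Ideal.mem_span_singleton'.mp hq
    rw [map_mul, map_pow, aeval_X, hx, mul_zero]
  let f : Λ[X] ⧸ I →ₐ[Λ] A := Ideal.Quotient.liftₐ I (aeval x) hI
  have hfT : f (Ideal.Quotient.mk I X) = x :=
    (AlgHom.congr_fun (Ideal.Quotient.liftₐ_comp I (aeval x) hI) X).trans (aeval_X x)
  have hT : (Ideal.Quotient.mk I X) ^ p ^ n = 0 := by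
    rw [← map_pow, Ideal.Quotient.eq_zero_iff_mem]
    exact Ideal.mem_span_singleton_self _
  rw [← hfT, ← map_wittArtinHasseExp, ← map_wittArtinHasseExp, ← map_wittArtinHasseExp,
    wittArtinHasseExp_add_of_pow_eq_zero_of_commRing hT, map_mul]

end WittArtinHasse

theorem stmt6_general (p : ℕ) [Fact p.Prime] (n : ℕ)
    (Λ : Type*) [CommRing Λ] [Algebra ℚ Λ]
    (A : Type*) [Ring A] [Algebra ℚ A] [Algebra Λ A]
    (X : A) (hX : X ^ p ^ n = 0) :
    (∀ t s : TruncatedWittVector p n Λ,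
        wittArtinHasseExp p n X (t + s) = wittArtinHasseExp p n X t * wittArtinHasseExp p n X s)
      ∧ (∀ t : TruncatedWittVector p n Λ, IsUnit (wittArtinHasseExp p n X t))
      ∧ ∃ φ : Multiplicative (TruncatedWittVector p n Λ) →* Aˣ,
          ∀ t : TruncatedWittVector p n Λ,
            ((φ (Multiplicative.ofAdd t) : Aˣ) : A) = wittArtinHasseExp p n X t := by
  let E : Multiplicative (TruncatedWittVector p n Λ) →* A :=
    { toFun := fun t => wittArtinHasseExp p n X t.toAdd
      map_one' := wittArtinHasseExp_zero X
      map_mul' := fun t s => wittArtinHasseExp_add_of_pow_eq_zero hX t.toAdd s.toAdd }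
  exact ⟨wittArtinHasseExp_add_of_pow_eq_zero hX, fun t => (E.toHomUnits (.ofAdd t)).isUnit,
    E.toHomUnits, fun _ => rfl⟩

/-- for a prime `p`, `n ≥ 1`, a commutative `ℚ`-algebra `Λ`, an associative
unital `Λ`-algebra `A`, and a nilpotent `X ∈ A` with `X^(p^n) = 0`, the Artin–Hasse map
`E_X : W_n(Λ) → A` satisfies `E_X(t + s) = E_X(t) · E_X(s)` for all truncated Witt
vectors `t, s ∈ W_n(Λ)`.  In particular each `E_X(t)` is invertible in `A`, so `E_X`
defines a group homomorphism from the additive group `W_n(Λ)` to the unit group of `A`. -/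
theorem stmt6 (p : ℕ) [Fact p.Prime] (n : ℕ) (hn : 1 ≤ n)
    (Λ : Type*) [CommRing Λ] [Algebra ℚ Λ]
    (A : Type*) [Ring A] [Algebra ℚ A] [Algebra Λ A] [IsScalarTower ℚ Λ A]
    (X : A) (hX : X ^ p ^ n = 0) :
    (∀ t s : TruncatedWittVector p n Λ,
        wittArtinHasseExp p n X (t + s) = wittArtinHasseExp p n X t * wittArtinHasseExp p n X s)
      ∧ (∀ t : TruncatedWittVector p n Λ, IsUnit (wittArtinHasseExp p n X t))
      ∧ ∃ φ : Multiplicative (TruncatedWittVector p n Λ) →* Aˣ,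
          ∀ t : TruncatedWittVector p n Λ,
            ((φ (Multiplicative.ofAdd t) : Aˣ) : A) = wittArtinHasseExp p n X t :=
  stmt6_general p n Λ A X hX
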